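/- (Theorem 3) Let n, N, ℓ ≥ 1, δ > 0, β > 0 and γ > 0. Suppose V ∈ ℝ[x_1,…,x_n] satisfies V(x) ≥ δ · ‖x‖_{2ℓ}^{2ℓ} for all x ∈ ℝⁿ; for each i = 1, …, N let p_i ∈ ℝ[x_1,…,x_n] be SOS and suppose the polynomial -(∇V · f_i) - p_i · (Σ_j x_j² - β) - δ · Σ_j x_j^{2ℓ} is SOS; and suppose there exists an SOS polynomial q ∈ ℝ[x_1,…,x_n] such that -(V - γ) + q · (Σ_j x_j² - β) is SOS. Then the sublevel set B = {x ∈ ℝⁿ : V(x) ≤ γ} is compact and is an absorbing set for the switched system whose i-th vector field is x ↦ (f_{i,1}(x), …, f_{i,n}(x)). -/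

import Mathlib

open MvPolynomial

/-- A polynomial is a sum of squares (SOS) if it is a finite sum of squares of
polynomials. -/
def IsSOS {n : ℕ} (p : MvPolynomial (Fin n) ℝ) : Prop :=
  ∃ (k : ℕ) (g : Fin k → MvPolynomial (Fin n) ℝ), p = ∑ j, g j ^ 2

/-- A solution of the switched system whose `i`-th vector field is
`x ↦ (f_{i,1}(x), …, f_{i,n}(x))`, given by polynomials `f i j`. -/
def IsSwitchedSolution {n N : ℕ} (f : Fin N → Fin n → MvPolynomial (Fin n) ℝ)
    (x : ℝ → (Fin n → ℝ)) : Prop :=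
  ∀ t : ℝ, 0 ≤ t → ∃ i : Fin N,
    HasDerivWithinAt x (fun j => eval (x t) (f i j)) (Set.Ici 0) t

/-- `M` is positively invariant for the switched system. -/
def PositivelyInvariant {n N : ℕ} (f : Fin N → Fin n → MvPolynomial (Fin n) ℝ)
    (M : Set (Fin n → ℝ)) : Prop :=
  ∀ x : ℝ → (Fin n → ℝ), IsSwitchedSolution f x →
    x 0 ∈ M → ∀ t : ℝ, 0 ≤ t → x t ∈ M

/-- `M` is an absorbing set for the switched system: it is positively invariant and
every compact set is absorbed into `M` after some uniform time. -/
def AbsorbingSet {n N : ℕ} (f : Fin N → Fin n → MvPolynomial (Fin n) ℝ)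
    (M : Set (Fin n → ℝ)) : Prop :=
  PositivelyInvariant f M ∧
    ∀ C : Set (Fin n → ℝ), IsCompact C →
      ∃ tC : ℝ, 0 ≤ tC ∧
        ∀ x : ℝ → (Fin n → ℝ), IsSwitchedSolution f x →
          x 0 ∈ C → ∀ t : ℝ, tC ≤ t → x t ∈ M

open Set

/-! The certificate for `q` puts the ball `‖x‖₂² ≤ β` inside `B`, and the certificates for the `p i`
give `∇V · f_i ≤ -δ ‖x‖_{2ℓ}^{2ℓ} ≤ -δ β^ℓ / n^(ℓ-1)` outside that ball (power mean inequality).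
So along every solution `V` decreases at a uniform rate `κ > 0` while it is above `γ`: a solution
starting in `B` stays there, and one starting with `V ≤ M` is in `B` from time `(M - γ) / κ` on.
Compactness of `B` comes from the coercivity bound `V ≥ δ ‖x‖_{2ℓ}^{2ℓ}`. -/

theorem IsSOS.eval_nonneg {n : ℕ} {p : MvPolynomial (Fin n) ℝ} (h : IsSOS p) (x : Fin n → ℝ) :
    0 ≤ eval x p := by
  obtain ⟨k, g, rfl⟩ := h
  simpa only [map_sum, map_pow] using Finset.sum_nonneg fun j _ => sq_nonneg (eval x (g j))

theorem HasDerivWithinAt.mvPolynomial_eval {σ : Type*} [Fintype σ] [DecidableEq σ]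
    (P : MvPolynomial σ ℝ) {x : ℝ → σ → ℝ} {v : σ → ℝ} {s : Set ℝ} {t : ℝ}
    (hx : HasDerivWithinAt x v s t) :
    HasDerivWithinAt (fun τ => eval (x τ) P) (∑ j, eval (x t) (pderiv j P) * v j) s t := by
  induction P using MvPolynomial.induction_on with
  | C a => simpa using hasDerivWithinAt_const t s a
  | add p q hp hq =>
    have h : HasDerivWithinAt (fun τ => eval (x τ) p + eval (x τ) q) _ s t := hp.add hq
    simpa [add_mul, Finset.sum_add_distrib] using h
  | mul_X p i hp =>
    have h : HasDerivWithinAt (fun τ => eval (x τ) p * x τ i) _ s t :=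
      hp.mul (hasDerivWithinAt_pi.1 hx i)
    convert h using 1
    · simp
    · simp only [pderiv_mul, pderiv_X, map_add, map_mul, eval_X, add_mul, Finset.sum_add_distrib,
        Finset.sum_mul]
      congr 1
      · exact Finset.sum_congr rfl fun j _ => by ring
      · simp [Pi.single_apply]

theorem pow_div_card_pow_le_sum_pow_two_mul {ι : Type*} [Fintype ι] {y : ι → ℝ} {β : ℝ}
    (hβ : 0 ≤ β) (hy : β ≤ ∑ i, y i ^ 2) (m : ℕ) :
    β ^ (m + 1) / (Fintype.card ι : ℝ) ^ m ≤ ∑ i, y i ^ (2 * (m + 1)) :=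
  calc β ^ (m + 1) / (Fintype.card ι : ℝ) ^ m
      ≤ (∑ i, y i ^ 2) ^ (m + 1) / (Fintype.card ι : ℝ) ^ m := by gcongr
    _ ≤ ∑ i, (y i ^ 2) ^ (m + 1) := pow_sum_div_card_le_sum_pow (fun i _ => sq_nonneg (y i)) m
    _ = ∑ i, y i ^ (2 * (m + 1)) := by simp only [pow_mul]

theorem isBounded_setOf_sum_pow_two_mul_le {ι : Type*} [Fintype ι] {k : ℕ} (hk : k ≠ 0) (R : ℝ) :
    Bornology.IsBounded {y : ι → ℝ | ∑ i, y i ^ (2 * k) ≤ R} := by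
  have hR : 0 ≤ max 1 R := le_max_of_le_left zero_le_one
  refine (Metric.isBounded_closedBall (x := 0) (r := max 1 R)).subset fun y hy => ?_
  rw [mem_closedBall_zero_iff, pi_norm_le_iff_of_nonneg hR]
  intro i
  rw [Real.norm_eq_abs]
  rcases le_total |y i| 1 with h | h
  · exact h.trans (le_max_left _ _)
  · calc |y i| ≤ |y i| ^ (2 * k) := le_self_pow₀ h (by positivity)
      _ = y i ^ (2 * k) := (even_two_mul k).pow_abs _
      _ ≤ ∑ j, y j ^ (2 * k) :=
        Finset.single_le_sum (fun j _ => (even_two_mul k).pow_nonneg (y j)) (Finset.mem_univ i)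
      _ ≤ max 1 R := le_max_of_le_right hy

theorem isCompact_setOf_le_of_sum_pow_two_mul_le {ι : Type*} [Fintype ι] {k : ℕ} (hk : k ≠ 0)
    {g : (ι → ℝ) → ℝ} (hg : Continuous g) {δ : ℝ} (hδ : 0 < δ)
    (hcoercive : ∀ y, δ * ∑ i, y i ^ (2 * k) ≤ g y) (γ : ℝ) :
    IsCompact {y | g y ≤ γ} :=
  Metric.isCompact_of_isClosed_isBounded (isClosed_le hg continuous_const) <|
    (isBounded_setOf_sum_pow_two_mul_le hk (γ / δ)).subset fun y (hy : g y ≤ γ) =>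
      (le_div_iff₀' hδ).2 ((hcoercive y).trans hy)

section Certificates

variable {n : ℕ} {β : ℝ} {y : Fin n → ℝ}

theorem eval_le_of_isSOS_of_sum_sq_le {V q : MvPolynomial (Fin n) ℝ} {γ : ℝ} (hq : IsSOS q)
    (hcert : IsSOS (-(V - C γ) + q * ((∑ j, X j ^ 2) - C β))) (hy : ∑ j, y j ^ 2 ≤ β) :
    eval y V ≤ γ := by
  have h := hcert.eval_nonneg y
  simp only [map_add, map_neg, map_sub, map_mul, map_sum, map_pow, eval_C, eval_X] at h
  nlinarith [mul_nonpos_of_nonneg_of_nonpos (hq.eval_nonneg y) (sub_nonpos.2 hy)]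

theorem eval_le_of_isSOS_of_le_sum_sq {L p : MvPolynomial (Fin n) ℝ} {δ : ℝ} {k : ℕ}
    (hp : IsSOS p)
    (hcert : IsSOS (-L - p * ((∑ j, X j ^ 2) - C β) - C δ * ∑ j, X j ^ k))
    (hy : β ≤ ∑ j, y j ^ 2) :
    eval y L ≤ -(δ * ∑ j, y j ^ k) := by
  have h := hcert.eval_nonneg y
  simp only [map_sub, map_neg, map_mul, map_sum, map_pow, eval_C, eval_X] at h
  nlinarith [mul_nonneg (hp.eval_nonneg y) (sub_nonneg.2 hy)]

end Certificates

section Lyapunov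

variable {W W' : ℝ → ℝ} {a b γ κ : ℝ}

theorem le_of_le_of_deriv_right_le_neg_above (hκ : 0 < κ) (hab : a ≤ b)
    (hW : ContinuousOn W (Icc a b)) (hW' : ∀ t ∈ Ico a b, HasDerivWithinAt W (W' t) (Ici t) t)
    (hdecr : ∀ t ∈ Ico a b, γ < W t → W' t ≤ -κ) (ha : W a ≤ γ) : W b ≤ γ := by
  -- `hdecr` says nothing at the level `γ` itself, so fence with `γ + ε` instead.
  refine le_of_forall_pos_le_add fun ε hε =>
    image_le_of_deriv_right_lt_deriv_boundary' hW hW' (B := fun _ => γ + ε) (B' := fun _ => 0)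
      (by linarith) continuousOn_const (fun t _ => hasDerivWithinAt_const t _ _)
      (fun t ht hWt => (hdecr t ht (by linarith)).trans_lt (neg_lt_zero.2 hκ))
      (right_mem_Icc.2 hab)

theorem exists_le_of_deriv_right_le_neg_above (hab : a ≤ b)
    (hW : ContinuousOn W (Icc a b)) (hW' : ∀ t ∈ Ico a b, HasDerivWithinAt W (W' t) (Ici t) t)
    (hdecr : ∀ t ∈ Ico a b, γ < W t → W' t ≤ -κ) (hreach : W a - κ * (b - a) ≤ γ) :
    ∃ s ∈ Icc a b, W s ≤ γ := by
  by_contra! habove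
  have hB (s : ℝ) : HasDerivAt (fun s => W a - κ * (s - a)) (-κ) s := by
    simpa using ((hasDerivAt_id s).sub_const a).const_mul κ |>.const_sub (W a)
  have hWb := image_le_of_deriv_right_le_deriv_boundary hW hW' (by simp)
    (fun s _ => (hB s).continuousAt.continuousWithinAt) (fun s _ => (hB s).hasDerivWithinAt)
    (fun s hs => hdecr s hs (habove s (Ico_subset_Icc_self hs))) (right_mem_Icc.2 hab)
  exact (habove b (right_mem_Icc.2 hab)).not_ge (hWb.trans hreach)

theorem le_of_sub_mul_le_of_deriv_le_neg_above (hκ : 0 < κ)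
    (hW : ∀ t, 0 ≤ t → ∃ d, HasDerivWithinAt W d (Ici 0) t ∧ (γ < W t → d ≤ -κ))
    {t : ℝ} (ht : 0 ≤ t) (hreach : W 0 - κ * t ≤ γ) : W t ≤ γ := by
  choose! W' hW' using hW
  have hcont : ContinuousOn W (Ici 0) := fun s hs => (hW' s hs).1.continuousWithinAt
  have hright (s) (hs : 0 ≤ s) : HasDerivWithinAt W (W' s) (Ici s) s :=
    (hW' s hs).1.mono (Ici_subset_Ici.2 hs)
  obtain ⟨s, hs, hWs⟩ := exists_le_of_deriv_right_le_neg_above ht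
    (hcont.mono Icc_subset_Ici_self) (fun s hs => hright s hs.1)
    (fun s hs => (hW' s hs.1).2) (by simpa using hreach)
  exact le_of_le_of_deriv_right_le_neg_above hκ hs.2
    (hcont.mono (Icc_subset_Ici_iff hs.2 |>.2 hs.1)) (fun r hr => hright r (hs.1.trans hr.1))
    (fun r hr => (hW' r (hs.1.trans hr.1)).2) hWs

end Lyapunov

theorem IsSwitchedSolution.exists_hasDerivWithinAt_eval {n N : ℕ}
    {f : Fin N → Fin n → MvPolynomial (Fin n) ℝ} {x : ℝ → Fin n → ℝ}
    (hx : IsSwitchedSolution f x) (P : MvPolynomial (Fin n) ℝ) {t : ℝ} (ht : 0 ≤ t) :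
    ∃ i, HasDerivWithinAt (fun τ => eval (x τ) P)
      (eval (x t) (∑ j, pderiv j P * f i j)) (Ici 0) t := by
  obtain ⟨i, hi⟩ := hx t ht
  exact ⟨i, by simpa only [map_sum, map_mul] using hi.mvPolynomial_eval P⟩

theorem sublevel_is_absorbing_of_sos_general {n N ℓ : ℕ} (hn : 1 ≤ n) (hℓ : 1 ≤ ℓ)
    (δ β γ : ℝ) (hδ : 0 < δ) (hβ : 0 < β)
    (f : Fin N → Fin n → MvPolynomial (Fin n) ℝ)
    (V : MvPolynomial (Fin n) ℝ)
    (hVlb : ∀ x : Fin n → ℝ, δ * ∑ j, x j ^ (2 * ℓ) ≤ eval x V)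
    (p : Fin N → MvPolynomial (Fin n) ℝ) (hp : ∀ i, IsSOS (p i))
    (hsos : ∀ i, IsSOS
      (-(∑ j, pderiv j V * f i j)
        - p i * ((∑ j, X j ^ 2) - C β)
        - C δ * ∑ j, X j ^ (2 * ℓ)))
    (q : MvPolynomial (Fin n) ℝ) (hq : IsSOS q)
    (hqsos : IsSOS (-(V - C γ) + q * ((∑ j, X j ^ 2) - C β))) :
    IsCompact {x : Fin n → ℝ | eval x V ≤ γ} ∧
      AbsorbingSet f {x : Fin n → ℝ | eval x V ≤ γ} := by
  obtain ⟨m, rfl⟩ : ∃ m, ℓ = m + 1 := ⟨ℓ - 1, by omega⟩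
  set κ := δ * (β ^ (m + 1) / (n : ℝ) ^ m)
  have hκ : 0 < κ := by positivity
  have hdecay (x : ℝ → Fin n → ℝ) (hx : IsSwitchedSolution f x) (t : ℝ) (ht : 0 ≤ t)
      (hreach : eval (x 0) V - κ * t ≤ γ) : eval (x t) V ≤ γ := by
    refine le_of_sub_mul_le_of_deriv_le_neg_above (W := fun τ => eval (x τ) V) hκ
      (fun s hs => ?_) ht hreach
    obtain ⟨i, hi⟩ := hx.exists_hasDerivWithinAt_eval V hs
    refine ⟨_, hi, fun habove => ?_⟩
    have hout : β ≤ ∑ j, x s j ^ 2 := le_of_not_ge fun hin =>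
      habove.not_ge (eval_le_of_isSOS_of_sum_sq_le hq hqsos hin)
    have hpow := pow_div_card_pow_le_sum_pow_two_mul hβ.le hout m
    rw [Fintype.card_fin] at hpow
    calc _ ≤ -(δ * ∑ j, x s j ^ (2 * (m + 1))) :=
          eval_le_of_isSOS_of_le_sum_sq (hp i) (hsos i) hout
      _ ≤ -κ := neg_le_neg (mul_le_mul_of_nonneg_left hpow hδ.le)
  refine ⟨isCompact_setOf_le_of_sum_pow_two_mul_le (by omega) (continuous_eval V) hδ hVlb γ,
    fun x hx (h0 : eval (x 0) V ≤ γ) t ht =>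
      hdecay x hx t ht (by nlinarith [mul_nonneg hκ.le ht]), fun K hK => ?_⟩
  obtain ⟨M, hM⟩ := hK.bddAbove_image (continuous_eval V).continuousOn
  refine ⟨max 0 ((M - γ) / κ), le_max_left _ _, fun x hx hx0 t ht => ?_⟩
  have hM0 : eval (x 0) V ≤ M := hM ⟨x 0, hx0, rfl⟩
  have ht' : M - γ ≤ κ * t := (div_le_iff₀' hκ).1 (le_of_max_le_right ht)
  exact hdecay x hx t ((le_max_left _ _).trans ht) (by linarith)

/-- Theorem 3: under the SOS certificates of Theorems 2 and 3, the sublevel set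
`B = {x : V(x) ≤ γ}` is compact and is an absorbing set for the switched system. -/
theorem sublevel_is_absorbing_of_sos {n N ℓ : ℕ} (hn : 1 ≤ n) (hN : 1 ≤ N) (hℓ : 1 ≤ ℓ)
    (δ β γ : ℝ) (hδ : 0 < δ) (hβ : 0 < β) (hγ : 0 < γ)
    (f : Fin N → Fin n → MvPolynomial (Fin n) ℝ)
    (V : MvPolynomial (Fin n) ℝ)
    (hVlb : ∀ x : Fin n → ℝ, δ * ∑ j, x j ^ (2 * ℓ) ≤ eval x V)
    (p : Fin N → MvPolynomial (Fin n) ℝ) (hp : ∀ i, IsSOS (p i))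
    (hsos : ∀ i, IsSOS
      (-(∑ j, pderiv j V * f i j)
        - p i * ((∑ j, X j ^ 2) - C β)
        - C δ * ∑ j, X j ^ (2 * ℓ)))
    (q : MvPolynomial (Fin n) ℝ) (hq : IsSOS q)
    (hqsos : IsSOS (-(V - C γ) + q * ((∑ j, X j ^ 2) - C β))) :
    IsCompact {x : Fin n → ℝ | eval x V ≤ γ} ∧
      AbsorbingSet f {x : Fin n → ℝ | eval x V ≤ γ} :=
  sublevel_is_absorbing_of_sos_general hn hℓ δ β γ hδ hβ f V hVlb p hp hsos q hq hqsos
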